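/- arXiv:1010.5918 — 3 statements merged into one kernel-verified Lean document; each statement's English description precedes it below -/
import Mathlib

section
/- Rule 1 transfer step: let u = (u₀,u₁,u₂,u₃) ∈ ℝ⁴ with all coordinates nonnegative, and let v = (u₁, u₀+u₁, u₃, u₂). If u ≥ (φ^{e₀}, φ^{e₁}, φ^{e₂}, φ^{e₃}) coordinatewise for natural numbers e₀,…,e₃, then there exist natural numbers f₀,…,f₃ with v ≥ (φ^{f₀}, φ^{f₁}, φ^{f₂}, φ^{f₃}) coordinatewise and Φ(f) ≥ Φ(e) + 1, where Φ(x) = 2(x₁+x₂+x₃) − |{s ∈ {1,2,3} : x_s > x₀}|. -/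
noncomputable def goldenRatio' : ℝ := (1 + Real.sqrt 5) / 2

/-- Ψ(x) = 2(x₁ + x₂ + x₃) for an exponent vector x ∈ ℕ⁴. -/
def Psi (x : Fin 4 → ℕ) : ℕ := 2 * (x 1 + x 2 + x 3)

/-- Φ(x) = Ψ(x) − |{s ∈ {1,2,3} : x_s > x₀}| for an exponent vector x ∈ ℕ⁴. -/
def Phi (x : Fin 4 → ℕ) : ℤ :=
  (Psi x : ℤ) - (({1, 2, 3} : Finset (Fin 4)).filter fun s => x 0 < x s).card

/-!
Write `a = e₀`, `b = e₁` and take `f = (b, c, e₃, e₂)`. The middle coordinate `u₀ + u₁` is at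
least `φ^a + φ^b`, which dominates `φ^b`, `φ^(b+1)` or `φ^(b+2)` according as `a < b`, `a = b`
or `a > b` (by `φ < 2` and `φ^(b+2) = φ^(b+1) + φ^b`), so `c` can be taken that large. Each step
of `c` above `b` gains 2 in `Ψ` and costs at most one indicator, while moving the reference
exponent from `a` to `b` loses indicators only when `a > b`, and then at most two.

Mathlib's `Real.goldenRatio` is `goldenRatio'` by definition.
-/

open Real goldenRatio

theorem exists_goldenRatio_pow_le_add_pow (a b : ℕ) :
    ∃ c, φ ^ c ≤ φ ^ a + φ ^ b ∧ b ≤ c ∧ (b ≤ a → b + 1 ≤ c) ∧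
      (b < a → b + 2 ≤ c) := by
  rcases lt_trichotomy a b with hab | rfl | hab
  · exact ⟨b, le_add_of_nonneg_left (by positivity), le_rfl, by omega, by omega⟩
  · refine ⟨a + 1, ?_, by omega, fun _ => le_rfl, by omega⟩
    rw [pow_succ', ← two_mul]
    gcongr
    exact goldenRatio_lt_two.le
  · refine ⟨b + 2, ?_, by omega, fun _ => by omega, fun _ => le_rfl⟩
    rw [← sub_add_cancel (φ ^ (b + 2)) (φ ^ (b + 1)), goldenRatio_pow_sub_goldenRatio_pow,
      add_comm]
    gcongr
    exacts [one_lt_goldenRatio.le, hab]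

theorem card_filter_one_two_three (P : Fin 4 → Prop) [DecidablePred P] :
    ((({1, 2, 3} : Finset (Fin 4)).filter P).card : ℤ)
      = (if P 1 then 1 else 0) + (if P 2 then 1 else 0) + (if P 3 then 1 else 0) := by
  rw [Finset.card_filter, Nat.cast_sum, Finset.sum_insert (by decide),
    Finset.sum_insert (by decide), Finset.sum_singleton, add_assoc]
  push_cast
  rfl

theorem Phi_add_one_le (e : Fin 4 → ℕ) {c : ℕ} (hc : e 1 ≤ c)
    (hc₁ : e 1 ≤ e 0 → e 1 + 1 ≤ c) (hc₂ : e 1 < e 0 → e 1 + 2 ≤ c) :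
    Phi e + 1 ≤ Phi ![e 1, c, e 3, e 2] := by
  simp only [Phi, card_filter_one_two_three]
  simp only [Psi, Matrix.cons_val_zero, Matrix.cons_val_one, Matrix.cons_val_two,
    Matrix.cons_val_three, Matrix.head_cons, Matrix.tail_cons]
  split_ifs <;> omega

theorem rule1_transfer_step_general (u : Fin 4 → ℝ)
    (e : Fin 4 → ℕ) (he : ∀ i, goldenRatio' ^ e i ≤ u i) :
    ∃ f : Fin 4 → ℕ,
      (∀ i, goldenRatio' ^ f i ≤ ![u 1, u 0 + u 1, u 3, u 2] i) ∧
      Phi e + 1 ≤ Phi f := by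
  obtain ⟨c, hc, hbc, hbc₁, hbc₂⟩ := exists_goldenRatio_pow_le_add_pow (e 0) (e 1)
  refine ⟨![e 1, c, e 3, e 2], fun i => ?_, Phi_add_one_le e hbc hbc₁ hbc₂⟩
  fin_cases i
  · exact he 1
  · exact hc.trans (add_le_add (he 0) (he 1))
  · exact he 3
  · exact he 2

theorem rule1_transfer_step (u : Fin 4 → ℝ) (hu : ∀ i, 0 ≤ u i)
    (e : Fin 4 → ℕ) (he : ∀ i, goldenRatio' ^ e i ≤ u i) :
    ∃ f : Fin 4 → ℕ,
      (∀ i, goldenRatio' ^ f i ≤ ![u 1, u 0 + u 1, u 3, u 2] i) ∧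
      Phi e + 1 ≤ Phi f :=
  rule1_transfer_step_general u e he
end

section
/- Rule 3 transfer step: let u,w,z ∈ ℝ⁴ be nonnegative vectors with u ≥ (φ^{a_s})_s, w ≥ (φ^{b_s})_s, z ≥ (φ^{c_s})_s coordinatewise for naturals a_s,b_s,c_s. Then v = (u₀w₀z₀+u₁w₁z₁, u₀w₂z₃+u₁w₃z₂, u₂w₃z₀+u₃w₂z₁, u₂w₁z₃+u₃w₀z₂) satisfies v ≥ (φ^{a₁+b₁+c₁}, φ^{a₁+b₃+c₂}, φ^{a₃+b₂+c₁}, φ^{a₂+b₁+c₃}) coordinatewise, and Ψ of the new exponents equals Ψ(a)+Ψ(b)+Ψ(c), where Ψ(x)=2(x₁+x₂+x₃). -/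
theorem rule3_transfer_step (u w z : Fin 4 → ℝ)
    (hu : ∀ i, 0 ≤ u i) (hw : ∀ i, 0 ≤ w i) (hz : ∀ i, 0 ≤ z i)
    (a b c : Fin 4 → ℕ)
    (ha : ∀ i, goldenRatio' ^ a i ≤ u i) (hb : ∀ i, goldenRatio' ^ b i ≤ w i)
    (hc : ∀ i, goldenRatio' ^ c i ≤ z i) :
    (∀ i, goldenRatio' ^
        (![a 1 + b 1 + c 1, a 1 + b 3 + c 2, a 3 + b 2 + c 1, a 2 + b 1 + c 3] i) ≤
      ![u 0 * w 0 * z 0 + u 1 * w 1 * z 1, u 0 * w 2 * z 3 + u 1 * w 3 * z 2,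
        u 2 * w 3 * z 0 + u 3 * w 2 * z 1, u 2 * w 1 * z 3 + u 3 * w 0 * z 2] i) ∧
    Psi ![a 1 + b 1 + c 1, a 1 + b 3 + c 2, a 3 + b 2 + c 1, a 2 + b 1 + c 3] =
      Psi a + Psi b + Psi c := by
  have hφ : (0:ℝ) ≤ goldenRatio' := by
    unfold goldenRatio'
    positivity
  have key : ∀ (i j k : Fin 4),
      goldenRatio' ^ (a i + b j + c k) ≤ u i * w j * z k := by
    intro i j k
    rw [pow_add, pow_add]
    exact mul_le_mul (mul_le_mul (ha i) (hb j) (pow_nonneg hφ _)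
      (le_trans (pow_nonneg hφ _) (ha i))) (hc k) (pow_nonneg hφ _)
      (mul_nonneg (hu i) (hw j))
  constructor
  · intro i
    fin_cases i <;> simp only [Matrix.cons_val_zero, Matrix.cons_val_one, Matrix.head_cons,
      Matrix.cons_val_two, Matrix.tail_cons, Matrix.cons_val_three]
    · exact le_add_of_nonneg_of_le (mul_nonneg (mul_nonneg (hu _) (hw _)) (hz _)) (key 1 1 1)
    · exact le_add_of_nonneg_of_le (mul_nonneg (mul_nonneg (hu _) (hw _)) (hz _)) (key 1 3 2)
    · exact le_add_of_nonneg_of_le (mul_nonneg (mul_nonneg (hu _) (hw _)) (hz _)) (key 3 2 1)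
    · exact le_add_of_le_of_nonneg (key 2 1 3) (mul_nonneg (mul_nonneg (hu _) (hw _)) (hz _))
  · simp [Psi]
    ring
end

section
/- Path iteration bound: define a map on ℕ⁴-exponent bounds corresponding to Rule 1, where each application increases Φ by at least 1 (Φ(x) = 2(x₁+x₂+x₃) − |{s : x_s > x₀}|). Since 0 ≤ |{s : x_s > x₀}| ≤ 3 always, applying the Rule-1 step k times to a vector bounded below by (φ^{e_s})_s yields a vector bounded below by some (φ^{f_s})_s with Ψ(f) ≥ Ψ(e) + max(k − 3, 0). -/
/-- One (nondeterministic) Rule-1 step on transfer vectors. -/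
def Rule1Step (x y : Fin 4 → ℝ) : Prop :=
  y = ![x 1, x 0 + x 1, x 3, x 2] ∨
  y = ![x 1, x 3, x 2, x 0 + x 1] ∨
  y = ![x 1, x 2, x 0 + x 1, x 3]

open Real goldenRatio

def sumExp (a b : ℕ) : ℕ := if a < b then b else if a ≤ b + 1 then a + 1 else a

lemma le_sumExp (a b : ℕ) : b ≤ sumExp a b := by
  unfold sumExp; split_ifs <;> omega

lemma goldenRatio_pow_sumExp_le (a b : ℕ) : φ ^ sumExp a b ≤ φ ^ a + φ ^ b := by
  have hpos (n : ℕ) : 0 < φ ^ n := pow_pos goldenRatio_pos n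
  unfold sumExp
  split_ifs
  · linarith [hpos a]
  · obtain rfl | rfl : a = b ∨ a = b + 1 := by omega
    · calc φ ^ (a + 1) = φ ^ a * φ := pow_succ φ a
        _ ≤ φ ^ a * 2 := by gcongr; exact goldenRatio_lt_two.le
        _ = φ ^ a + φ ^ a := by ring
    · linarith [goldenRatio_pow_sub_goldenRatio_pow b]
  · linarith [hpos b]

def Rule1ExpStep (x y : Fin 4 → ℕ) : Prop :=
  y = ![x 1, sumExp (x 0) (x 1), x 3, x 2] ∨
  y = ![x 1, x 3, x 2, sumExp (x 0) (x 1)] ∨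
  y = ![x 1, x 2, sumExp (x 0) (x 1), x 3]

lemma pow_le_vecCons {a b c d : ℕ} {p q r s : ℝ} (ha : φ ^ a ≤ p) (hb : φ ^ b ≤ q)
    (hc : φ ^ c ≤ r) (hd : φ ^ d ≤ s) : ∀ i, φ ^ ![a, b, c, d] i ≤ ![p, q, r, s] i := by
  intro i; fin_cases i <;> assumption

lemma Rule1Step.exists_rule1ExpStep {x : Fin 4 → ℕ} {u v : Fin 4 → ℝ}
    (hu : ∀ i, φ ^ x i ≤ u i) (h : Rule1Step u v) :
    ∃ y, Rule1ExpStep x y ∧ ∀ i, φ ^ y i ≤ v i := by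
  have hsum : φ ^ sumExp (x 0) (x 1) ≤ u 0 + u 1 :=
    (goldenRatio_pow_sumExp_le _ _).trans (add_le_add (hu 0) (hu 1))
  rcases h with rfl | rfl | rfl
  · exact ⟨_, Or.inl rfl, pow_le_vecCons (hu 1) hsum (hu 3) (hu 2)⟩
  · exact ⟨_, Or.inr (Or.inl rfl), pow_le_vecCons (hu 1) (hu 3) (hu 2) hsum⟩
  · exact ⟨_, Or.inr (Or.inr rfl), pow_le_vecCons (hu 1) (hu 2) hsum (hu 3)⟩

lemma Phi_eq_ite (x : Fin 4 → ℕ) : Phi x = 2 * ((x 1 : ℤ) + x 2 + x 3) -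
    ((if x 0 < x 1 then 1 else 0) + (if x 0 < x 2 then 1 else 0) +
      (if x 0 < x 3 then 1 else 0)) := by
  simp only [Phi, Psi, Nat.cast_mul, Nat.cast_ofNat, Nat.cast_add, Finset.filter_insert,
    Finset.filter_singleton, sub_right_inj]
  split_ifs <;> simp

lemma Rule1ExpStep.Phi_add_one_le {x y : Fin 4 → ℕ} (h : Rule1ExpStep x y) :
    Phi x + 1 ≤ Phi y := by
  rw [Phi_eq_ite, Phi_eq_ite]
  rcases h with rfl | rfl | rfl <;>
    · simp only [Matrix.cons_val_zero, Matrix.cons_val_one, Matrix.cons_val_two,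
        Matrix.cons_val_three, Matrix.head_cons, Matrix.tail_cons]
      unfold sumExp
      split_ifs <;> push_cast <;> omega

lemma Rule1ExpStep.Psi_le {x y : Fin 4 → ℕ} (h : Rule1ExpStep x y) : Psi x ≤ Psi y := by
  have := le_sumExp (x 0) (x 1)
  rcases h with rfl | rfl | rfl <;>
    · simp only [Psi, Matrix.cons_val_zero, Matrix.cons_val_one, Matrix.cons_val_two,
        Matrix.cons_val_three, Matrix.head_cons, Matrix.tail_cons]
      omega

lemma Phi_le_Psi (x : Fin 4 → ℕ) : Phi x ≤ Psi x := by
  unfold Phi; omega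

lemma Psi_sub_three_le_Phi (x : Fin 4 → ℕ) : (Psi x : ℤ) - 3 ≤ Phi x := by
  have h := Finset.card_filter_le ({1, 2, 3} : Finset (Fin 4)) (fun s => x 0 < x s)
  rw [show ({1, 2, 3} : Finset (Fin 4)).card = 3 by decide] at h
  unfold Phi; omega

lemma exists_pow_le_of_rule1Path (u : ℕ → Fin 4 → ℝ) (e : Fin 4 → ℕ)
    (h0 : ∀ i, φ ^ e i ≤ u 0 i) (k : ℕ) (hstep : ∀ j < k, Rule1Step (u j) (u (j + 1))) :
    ∃ f : Fin 4 → ℕ, (∀ i, φ ^ f i ≤ u k i) ∧ Phi e + k ≤ Phi f ∧ Psi e ≤ Psi f := by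
  induction k with
  | zero => exact ⟨e, h0, by simp, le_rfl⟩
  | succ k ih =>
    obtain ⟨f, hf, hPhi, hPsi⟩ := ih fun j hj => hstep j (by omega)
    obtain ⟨g, hfg, hg⟩ := (hstep k k.lt_succ_self).exists_rule1ExpStep hf
    exact ⟨g, hg, by push_cast; linarith [hfg.Phi_add_one_le], hPsi.trans hfg.Psi_le⟩

theorem rule1_path_iteration (k : ℕ) (u : ℕ → Fin 4 → ℝ) (e : Fin 4 → ℕ)
    (h0 : ∀ i, goldenRatio' ^ e i ≤ u 0 i)
    (hstep : ∀ j < k, Rule1Step (u j) (u (j + 1))) :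
    ∃ f : Fin 4 → ℕ,
      (∀ i, goldenRatio' ^ f i ≤ u k i) ∧ Psi e + (k - 3) ≤ Psi f := by
  -- `goldenRatio'` is definitionally Mathlib's `φ`.
  obtain ⟨f, hf, hPhi, hPsi⟩ := exists_pow_le_of_rule1Path u e h0 k hstep
  refine ⟨f, hf, ?_⟩
  have := Phi_le_Psi f
  have := Psi_sub_three_le_Phi e
  omega
end
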